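/- arXiv:2411.18426 — 2 statements merged into one kernel-verified Lean document; each statement's English description precedes it below -/
import Mathlib

section
/- Let A ⊆ binom([n],k_1) and B ⊆ binom([n],k_2) be cross-intersecting families. Then A_L and B_L are cross-intersecting, where A_L (respectively B_L) denotes the family consisting of the first |A| sets of binom([n],k_1) (respectively the first |B| sets of binom([n],k_2)) in the lexicographic order. -/
open Finset

/-- Lexicographic order on finite sets of naturals: A ≺_L B iff min(A\B) < min(B\A). -/
def lexLt (A B : Finset ℕ) : Prop := (A \ B).min < (B \ A).min

/-!
Reversing the ground set, `i ↦ n - i`, turns the lexicographic order into the reverse of colex,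
so `A_L` and `B_L` become final segments of colex. Two uniform families `𝒜` and `ℬ` on an
`n`-set are cross-intersecting iff `𝒜` misses the `(n - k₁ - k₂)`-fold shadow of the family of
complements of members of `ℬ`. By Kruskal–Katona, that shadow is smallest when `ℬ` is a colex
final segment, in which case it is itself a colex initial segment of `k₁`-sets. The `k₁`-sets
outside `A_L` also form an initial segment, and counting shows it is at least as large, hence
contains the shadow.
-/

open Finset.Colex
open scoped FinsetFamily

def CrossIntersecting {α : Type*} [DecidableEq α] (𝒜 ℬ : Finset (Finset α)) : Prop :=
  ∀ s ∈ 𝒜, ∀ t ∈ ℬ, (s ∩ t).Nonempty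

section CrossIntersecting

variable {α : Type*} [DecidableEq α] {𝒜 ℬ : Finset (Finset α)} {r s : ℕ}

lemma crossIntersecting_map_iff {β : Type*} [DecidableEq β] (e : α ↪ β) :
    CrossIntersecting (𝒜.map (mapEmbedding e).toEmbedding)
      (ℬ.map (mapEmbedding e).toEmbedding) ↔ CrossIntersecting 𝒜 ℬ := by
  simp [CrossIntersecting, ← map_inter]

variable [Fintype α]

lemma crossIntersecting_of_card_lt_add (h𝒜 : (𝒜 : Set (Finset α)).Sized r)
    (hℬ : (ℬ : Set (Finset α)).Sized s) (h : Fintype.card α < r + s) :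
    CrossIntersecting 𝒜 ℬ := fun X hX Y hY =>
  inter_nonempty_of_card_lt_card_add_card (subset_univ X) (subset_univ Y)
    (by rwa [card_univ, h𝒜 hX, hℬ hY])

lemma crossIntersecting_iff_disjoint_shadow_iterate_compls
    (h𝒜 : (𝒜 : Set (Finset α)).Sized r) (hℬ : (ℬ : Set (Finset α)).Sized s)
    (hrs : r + s ≤ Fintype.card α) :
    CrossIntersecting 𝒜 ℬ ↔ Disjoint 𝒜 (∂^[Fintype.card α - s - r] ℬᶜˢ) := by
  have hk : Fintype.card α - s = r + (Fintype.card α - s - r) := by omega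
  simp only [CrossIntersecting, disjoint_left, mem_shadow_iterate_iff_exists_mem_card_add,
    exists_compls_iff, card_compl, not_exists, not_and]
  refine forall₂_congr fun X hX => forall₂_congr fun Y hY => ?_
  rw [h𝒜 hX, hℬ hY, subset_compl_iff_disjoint_right, ← not_disjoint_iff_nonempty_inter]
  exact ⟨fun h hXY _ => h hXY, fun h hXY => h hXY hk⟩

end CrossIntersecting

namespace Finset.Colex

variable {α : Type*} [LinearOrder α] {𝒜 𝒜₁ 𝒜₂ : Finset (Finset α)} {r : ℕ}

def IsFinalSeg (𝒜 : Finset (Finset α)) (r : ℕ) : Prop :=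
  (𝒜 : Set (Finset α)).Sized r ∧
    ∀ ⦃s t : Finset α⦄, s ∈ 𝒜 → toColex s < toColex t ∧ #t = r → t ∈ 𝒜

lemma IsInitSeg.subset_of_card_le (h₁ : IsInitSeg 𝒜₁ r) (h₂ : IsInitSeg 𝒜₂ r)
    (h : #𝒜₁ ≤ #𝒜₂) : 𝒜₁ ⊆ 𝒜₂ :=
  (h₁.total h₂).elim id fun h₂₁ => (eq_of_subset_of_card_le h₂₁ h).ge

lemma IsInitSeg.shadow_iterate [Finite α] (h : IsInitSeg 𝒜 r) (k : ℕ) :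
    IsInitSeg (∂^[k] 𝒜) (r - k) := by
  induction k with
  | zero => simpa
  | succ k ih =>
    rw [Function.iterate_succ_apply', ← Nat.sub_sub]
    exact ih.shadow

variable [Fintype α]

lemma toColex_compl_lt_toColex_compl {s t : Finset α} :
    toColex sᶜ < toColex tᶜ ↔ toColex t < toColex s := by
  rw [← toColex_sdiff_lt_toColex_sdiff', compl_sdiff_compl, compl_sdiff_compl,
    toColex_sdiff_lt_toColex_sdiff']

lemma IsFinalSeg.compls (h : IsFinalSeg 𝒜 r) : IsInitSeg 𝒜ᶜˢ (Fintype.card α - r) := by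
  refine ⟨h.1.compls, fun s t hs ⟨hts, ht⟩ => ?_⟩
  rw [mem_compls] at hs ⊢
  refine h.2 hs ⟨toColex_compl_lt_toColex_compl.2 hts, ?_⟩
  have := h.1 hs
  rw [card_compl] at this ⊢
  omega

lemma IsFinalSeg.isInitSeg_sdiff (h : IsFinalSeg 𝒜 r) :
    IsInitSeg (powersetCard r univ \ 𝒜) r := by
  refine ⟨fun s hs => (mem_powersetCard_univ.1 (mem_sdiff.1 hs).1), fun s t hs ⟨hts, ht⟩ => ?_⟩
  rw [mem_sdiff, mem_powersetCard_univ] at hs ⊢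
  exact ⟨ht, fun htA => hs.2 (h.2 htA ⟨hts, hs.1⟩)⟩

end Finset.Colex

theorem crossIntersecting_of_isFinalSeg {n r s : ℕ} {𝒜 ℬ 𝒜' ℬ' : Finset (Finset (Fin n))}
    (h : CrossIntersecting 𝒜 ℬ) (h𝒜 : (𝒜 : Set (Finset (Fin n))).Sized r)
    (hℬ : (ℬ : Set (Finset (Fin n))).Sized s) (h𝒜' : IsFinalSeg 𝒜' r) (hℬ' : IsFinalSeg ℬ' s)
    (h𝒜𝒜' : #𝒜' ≤ #𝒜) (hℬℬ' : #ℬ' ≤ #ℬ) : CrossIntersecting 𝒜' ℬ' := by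
  rcases lt_or_ge (Fintype.card (Fin n)) (r + s) with hn | hn
  · exact crossIntersecting_of_card_lt_add h𝒜'.1 hℬ'.1 hn
  rw [crossIntersecting_iff_disjoint_shadow_iterate_compls h𝒜 hℬ hn] at h
  rw [crossIntersecting_iff_disjoint_shadow_iterate_compls h𝒜'.1 hℬ'.1 hn]
  set k := Fintype.card (Fin n) - s - r
  have hkk : #(∂^[k] ℬ'ᶜˢ) ≤ #(∂^[k] ℬᶜˢ) :=
    iterated_kk hℬ.compls (by simpa using hℬℬ') hℬ'.compls
  have hsized : ((∂^[k] ℬᶜˢ : Finset _) : Set (Finset (Fin n))).Sized r := by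
    convert hℬ.compls.shadow_iterate using 1; omega
  have hcount : #𝒜 + #(∂^[k] ℬᶜˢ) ≤ #(powersetCard r (univ : Finset (Fin n))) := by
    rw [← card_union_of_disjoint h]
    exact card_le_card (union_subset h𝒜.subset_powersetCard_univ hsized.subset_powersetCard_univ)
  have hseg : IsInitSeg (∂^[k] ℬ'ᶜˢ) r := by
    convert hℬ'.compls.shadow_iterate k using 1; omega
  have hsub : ∂^[k] ℬ'ᶜˢ ⊆ powersetCard r univ \ 𝒜' :=
    hseg.subset_of_card_le h𝒜'.isInitSeg_sdiff
      (by rw [card_sdiff_of_subset h𝒜'.1.subset_powersetCard_univ]; omega)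
  exact disjoint_of_subset_right hsub disjoint_sdiff

lemma lexLt_iff_exists_forall_lt {s t : Finset ℕ} :
    lexLt s t ↔ ∃ a ∈ s, a ∉ t ∧ ∀ b ∈ t, b ∉ s → a < b := by
  unfold lexLt
  constructor
  · intro h
    have hne : (s \ t).Nonempty := nonempty_iff_ne_empty.2 fun h₀ => by simp [h₀] at h
    obtain ⟨a, ha⟩ := min_of_nonempty hne
    refine ⟨a, (mem_sdiff.1 (mem_of_min ha)).1, (mem_sdiff.1 (mem_of_min ha)).2, fun b hb hbs => ?_⟩
    exact WithTop.coe_lt_coe.1 (ha ▸ h.trans_le (min_le (mem_sdiff.2 ⟨hb, hbs⟩)))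
  · rintro ⟨a, has, hat, ha⟩
    refine (min_le (mem_sdiff.2 ⟨has, hat⟩)).trans_lt ?_
    obtain h₀ | ⟨m, hm⟩ := (t \ s).eq_empty_or_nonempty
    · simp [h₀]
    obtain ⟨b, hb⟩ := min_of_mem hm
    have hbts := mem_sdiff.1 (mem_of_min hb)
    exact hb ▸ WithTop.coe_lt_coe.2 (ha b hbts.1 hbts.2)

variable {n : ℕ}

def revEmb (n : ℕ) : Fin n ↪ ℕ :=
  ⟨fun i => n - i, fun i j h => Fin.ext (by have := i.2; have := j.2; simp only at h; omega)⟩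

@[simp] lemma revEmb_apply (i : Fin n) : revEmb n i = n - i := rfl

lemma revEmb_strictAnti : StrictAnti (revEmb n) := fun i j h => by
  have := j.2
  rw [Fin.lt_def] at h
  simp only [revEmb_apply]
  omega

lemma map_univ_revEmb : univ.map (revEmb n) = Icc 1 n := by
  ext x
  simp only [mem_map, mem_univ, true_and, mem_Icc, revEmb_apply]
  exact ⟨by rintro ⟨i, rfl⟩; omega, fun h => ⟨⟨n - x, by omega⟩, by simp only; omega⟩⟩

lemma lexLt_map_iff {α : Type*} [LinearOrder α] {e : α ↪ ℕ} (he : StrictAnti e)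
    {s t : Finset α} : lexLt (s.map e) (t.map e) ↔ toColex t < toColex s := by
  simp [lexLt_iff_exists_forall_lt, toColex_lt_toColex_iff_exists_forall_lt, he.lt_iff_gt]

abbrev revMap (n : ℕ) : Finset (Fin n) ↪ Finset ℕ := (mapEmbedding (revEmb n)).toEmbedding

lemma powersetCard_Icc_eq_map (k : ℕ) :
    (Icc 1 n).powersetCard k = (powersetCard k univ).map (revMap n) := by
  rw [← map_univ_revEmb, powersetCard_map]

lemma exists_sized_map_revMap_eq {k : ℕ} {A : Finset (Finset ℕ)}
    (hA : A ⊆ (Icc 1 n).powersetCard k) :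
    ∃ 𝒜 : Finset (Finset (Fin n)), (𝒜 : Set (Finset (Fin n))).Sized k ∧ 𝒜.map (revMap n) = A := by
  rw [powersetCard_Icc_eq_map, subset_map_iff] at hA
  obtain ⟨𝒜, h𝒜, rfl⟩ := hA
  exact ⟨𝒜, subset_powersetCard_univ_iff.1 h𝒜, rfl⟩

lemma isFinalSeg_of_lexLt_closed {r : ℕ} {𝒜 : Finset (Finset (Fin n))}
    (h𝒜 : (𝒜 : Set (Finset (Fin n))).Sized r)
    (h : ∀ X ∈ 𝒜.map (revMap n), ∀ Y ∈ (Icc 1 n).powersetCard r, lexLt Y X →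
      Y ∈ 𝒜.map (revMap n)) :
    IsFinalSeg 𝒜 r := by
  refine ⟨h𝒜, fun s t hs ⟨hst, ht⟩ => ?_⟩
  rw [powersetCard_Icc_eq_map] at h
  simpa using h _ (mem_map_of_mem _ hs) _ (mem_map_of_mem _ (mem_powersetCard_univ.2 ht))
    ((lexLt_map_iff revEmb_strictAnti).2 hst)

theorem stmt6 (n k1 k2 : ℕ)
    (A B : Finset (Finset ℕ))
    (hA : A ⊆ (Finset.Icc 1 n).powersetCard k1)
    (hB : B ⊆ (Finset.Icc 1 n).powersetCard k2)
    (hcross : ∀ X ∈ A, ∀ Y ∈ B, (X ∩ Y).Nonempty)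
    (AL BL : Finset (Finset ℕ))
    (hAL : AL ⊆ (Finset.Icc 1 n).powersetCard k1)
    (hBL : BL ⊆ (Finset.Icc 1 n).powersetCard k2)
    (hALcard : AL.card = A.card) (hBLcard : BL.card = B.card)
    (hALinit : ∀ X ∈ AL, ∀ Y ∈ (Finset.Icc 1 n).powersetCard k1, lexLt Y X → Y ∈ AL)
    (hBLinit : ∀ X ∈ BL, ∀ Y ∈ (Finset.Icc 1 n).powersetCard k2, lexLt Y X → Y ∈ BL) :
    ∀ X ∈ AL, ∀ Y ∈ BL, (X ∩ Y).Nonempty := by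
  obtain ⟨𝒜, h𝒜, rfl⟩ := exists_sized_map_revMap_eq hA
  obtain ⟨ℬ, hℬ, rfl⟩ := exists_sized_map_revMap_eq hB
  obtain ⟨𝒜', h𝒜', rfl⟩ := exists_sized_map_revMap_eq hAL
  obtain ⟨ℬ', hℬ', rfl⟩ := exists_sized_map_revMap_eq hBL
  rw [card_map, card_map] at hALcard hBLcard
  exact (crossIntersecting_map_iff (revEmb n)).2 <|
    crossIntersecting_of_isFinalSeg ((crossIntersecting_map_iff (revEmb n)).1 hcross) h𝒜 hℬ
      (isFinalSeg_of_lexLt_closed h𝒜' hALinit) (isFinalSeg_of_lexLt_closed hℬ' hBLinit)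
      hALcard.le hBLcard.le
end

section
/- Let R be a nonempty subset of [n] and let F ⊆ binom([n],R) be a monotone, left-compressed family with generating family G. Then the sets D_R(E) for E ∈ G are pairwise disjoint and F = ⋃_{E ∈ G} D_R(E), where D_R(E) = {A ∈ binom([n],R) : A ∩ [max(E)] = E} (with the convention [max(∅)] = ∅). -/
open Finset

/-- binom([n],R): all subsets of [n] = {1,...,n} whose cardinality lies in R. -/
def famR (n : ℕ) (R : Finset ℕ) : Finset (Finset ℕ) :=
  (Finset.Icc 1 n).powerset.filter (fun A => A.card ∈ R)

/-- The up-set ⟨E⟩_R of E inside binom([n],R). -/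
def upSet (n : ℕ) (R : Finset ℕ) (E : Finset ℕ) : Finset (Finset ℕ) :=
  (famR n R).filter (fun A => E ⊆ A)

/-- F ⊆ binom([n],R) is monotone. -/
def MonotoneFam (n : ℕ) (R : Finset ℕ) (F : Finset (Finset ℕ)) : Prop :=
  ∀ A ∈ F, ∀ B, A ⊆ B → B ⊆ Finset.Icc 1 n → B.card ∈ R → B ∈ F

/-- The shift s_{i,j} applied to a member A of F. -/
def shiftSet (F : Finset (Finset ℕ)) (i j : ℕ) (A : Finset ℕ) : Finset ℕ :=
  if j ∈ A ∧ i ∉ A ∧ insert i (A.erase j) ∉ F then insert i (A.erase j) else A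

/-- The shift s_{i,j} applied to the family F. -/
def shiftFam (i j : ℕ) (F : Finset (Finset ℕ)) : Finset (Finset ℕ) :=
  F.image (shiftSet F i j)

/-- F is left-compressed: s_{i,j}(F) = F for all 1 ≤ i < j ≤ n. -/
def LeftCompressed (n : ℕ) (F : Finset (Finset ℕ)) : Prop :=
  ∀ i j, 1 ≤ i → i < j → j ≤ n → shiftFam i j F = F

/-- E is a generating set of the monotone family F ⊆ binom([n],R). -/
def IsGenSet (n : ℕ) (R : Finset ℕ) (F : Finset (Finset ℕ)) (E : Finset ℕ) : Prop :=
  E ⊆ Finset.Icc 1 n ∧ E.card ≤ R.sup id ∧ upSet n R E ⊆ F ∧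
    ∀ E', E' ⊂ E → ¬ upSet n R E' ⊆ F

/-- D_R(E) = {A ∈ binom([n],R) : A ∩ [max(E)] = E}, with [max(∅)] = ∅. -/
def DR (n : ℕ) (R : Finset ℕ) (E : Finset ℕ) : Finset (Finset ℕ) :=
  (famR n R).filter (fun A => A ∩ Finset.Icc 1 (E.sup id) = E)

/-! For `A ∈ F` take the least `m` with `⟨A ∩ [m]⟩_R ⊆ F` and put `E = A ∩ [m]`; then `A ∈ D_R(E)`.
If some `E' ⊂ E` also had `⟨E'⟩_R ⊆ F`, then either `m ∉ E'`, or left-compression lets us replace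
`m ∈ E'` by a smaller element of `E \ E'`; either way `A ∩ [m - 1]` would already generate inside
`F`, contradicting the choice of `m`. So `E` is a generating set. If `A ∈ D_R(E₁) ∩ D_R(E₂)` with
`max E₁ ≤ max E₂`, then `E₁ = A ∩ [max E₁] ⊆ E₂`, and minimality of `E₂` forces `E₁ = E₂`. -/

section

variable {n : ℕ} {R : Finset ℕ} {F : Finset (Finset ℕ)} {A B E E' : Finset ℕ}

lemma mem_famR : A ∈ famR n R ↔ A ⊆ Icc 1 n ∧ A.card ∈ R := by
  simp [famR]

lemma mem_upSet : A ∈ upSet n R E ↔ A ∈ famR n R ∧ E ⊆ A := by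
  simp [upSet]

lemma mem_DR : A ∈ DR n R E ↔ A ∈ famR n R ∧ A ∩ Icc 1 (E.sup id) = E := by
  simp [DR]

lemma upSet_anti (h : E' ⊆ E) : upSet n R E ⊆ upSet n R E' := fun _ hA =>
  mem_upSet.2 ⟨(mem_upSet.1 hA).1, h.trans (mem_upSet.1 hA).2⟩

lemma MonotoneFam.upSet_subset (hmono : MonotoneFam n R F) (hA : A ∈ F) : upSet n R A ⊆ F :=
  fun B hB => by
    obtain ⟨hBfam, hAB⟩ := mem_upSet.1 hB
    exact hmono A hA B hAB (mem_famR.1 hBfam).1 (mem_famR.1 hBfam).2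

lemma insert_erase_mem_famR {i j : ℕ} (hB : B ∈ famR n R) (hi : i ∈ Icc 1 n) (hiB : i ∉ B)
    (hjB : j ∈ B) : insert i (B.erase j) ∈ famR n R := by
  obtain ⟨hBsub, hBcard⟩ := mem_famR.1 hB
  refine mem_famR.2 ⟨insert_subset hi ((erase_subset j B).trans hBsub), ?_⟩
  rwa [card_insert_of_notMem (fun h => hiB (mem_of_mem_erase h)), card_erase_add_one hjB]

lemma LeftCompressed.insert_erase_mem (hlc : LeftCompressed n F) {i j : ℕ} (hA : A ∈ F)
    (hj : j ∈ A) (hi : i ∉ A) (h1i : 1 ≤ i) (hij : i < j) (hjn : j ≤ n) :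
    insert i (A.erase j) ∈ F := by
  by_contra h
  have hshift : shiftSet F i j A = insert i (A.erase j) := by
    simp [shiftSet, hj, hi, h]
  exact h (hlc i j h1i hij hjn ▸ mem_image.2 ⟨A, hA, hshift⟩)

lemma LeftCompressed.upSet_insert_erase_subset (hlc : LeftCompressed n F)
    (hE' : upSet n R E' ⊆ F) {e m : ℕ} (hm : m ∈ E') (he : e ∉ E') (h1e : 1 ≤ e) (hem : e < m)
    (hmn : m ≤ n) : upSet n R (insert e (E'.erase m)) ⊆ F := by
  intro B hB
  obtain ⟨hBfam, hB⟩ := mem_upSet.1 hB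
  have heB : e ∈ B := hB (mem_insert_self e _)
  have hE'B : E'.erase m ⊆ B := (subset_insert e _).trans hB
  by_cases hmB : m ∈ B
  · exact hE' (mem_upSet.2 ⟨hBfam, insert_erase hm ▸ insert_subset hmB hE'B⟩)
  · -- `B` is the `(e, m)`-shift of `B'`, which contains `E'`.
    set B' := insert m (B.erase e)
    have hB'fam : B' ∈ famR n R :=
      insert_erase_mem_famR hBfam (mem_Icc.2 ⟨by omega, hmn⟩) hmB heB
    have hE'B' : E' ⊆ B' := by
      rw [← insert_erase hm]
      exact insert_subset_insert m fun x hx =>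
        mem_erase.2 ⟨fun hxe => he (hxe ▸ mem_of_mem_erase hx), hE'B hx⟩
    have heB' : e ∉ B' := by simp [B', hem.ne]
    have hshift := hlc.insert_erase_mem (hE' (mem_upSet.2 ⟨hB'fam, hE'B'⟩)) (mem_insert_self m _)
      heB' h1e hem hmn
    rwa [erase_insert (fun h => hmB (mem_of_mem_erase h)), insert_erase heB] at hshift

lemma LeftCompressed.exists_subset_erase_upSet_subset (hlc : LeftCompressed n F) {m : ℕ}
    (hmn : m ≤ n) (hE : E ⊆ Icc 1 m) (hE'E : E' ⊂ E) (hE' : upSet n R E' ⊆ F) :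
    ∃ D ⊆ E.erase m, upSet n R D ⊆ F := by
  by_cases hm : m ∈ E'
  · obtain ⟨e, heE, heE'⟩ := exists_of_ssubset hE'E
    have hem : e ≠ m := fun h => heE' (h ▸ hm)
    have he := mem_Icc.1 (hE heE)
    refine ⟨insert e (E'.erase m), ?_,
      hlc.upSet_insert_erase_subset hE' hm heE' he.1 (by omega) hmn⟩
    exact insert_subset (mem_erase.2 ⟨hem, heE⟩) (erase_subset_erase m hE'E.subset)
  · exact ⟨E', fun x hx => mem_erase.2 ⟨fun h => hm (h ▸ hx), hE'E.subset hx⟩, hE'⟩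

lemma inter_Icc_sub_one (m : ℕ) : A ∩ Icc 1 (m - 1) = (A ∩ Icc 1 m).erase m := by
  ext x
  simp only [mem_inter, mem_Icc, mem_erase]
  constructor
  · rintro ⟨hxA, h1x, hx⟩
    exact ⟨by omega, hxA, h1x, by omega⟩
  · rintro ⟨hxm, hxA, h1x, hx⟩
    exact ⟨hxA, h1x, by omega⟩

lemma inter_Icc_sup_inter_Icc (m : ℕ) : A ∩ Icc 1 ((A ∩ Icc 1 m).sup id) = A ∩ Icc 1 m := by
  have hsup : (A ∩ Icc 1 m).sup id ≤ m := Finset.sup_le fun x hx => (mem_Icc.1 (mem_inter.1 hx).2).2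
  ext x
  simp only [mem_inter, mem_Icc]
  constructor
  · rintro ⟨hxA, h1x, hx⟩
    exact ⟨hxA, h1x, hx.trans hsup⟩
  · rintro ⟨hxA, h1x, hxm⟩
    exact ⟨hxA, h1x, le_sup (f := id) (mem_inter.2 ⟨hxA, mem_Icc.2 ⟨h1x, hxm⟩⟩)⟩

lemma subset_of_mem_DR_of_sup_le (hA : A ∈ DR n R E) (hA' : A ∈ DR n R E')
    (hsup : E.sup id ≤ E'.sup id) : E ⊆ E' := by
  rw [← (mem_DR.1 hA).2, ← (mem_DR.1 hA').2]
  exact inter_subset_inter_left (Icc_subset_Icc_right hsup)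

lemma IsGenSet.eq_of_subset (hE : IsGenSet n R F E) (hE' : IsGenSet n R F E') (h : E ⊆ E') :
    E = E' :=
  by_contra fun hne => hE'.2.2.2 E (ssubset_of_subset_of_ne h hne) hE.2.2.1

lemma IsGenSet.disjoint_DR (hE : IsGenSet n R F E) (hE' : IsGenSet n R F E') (hne : E ≠ E') :
    Disjoint (DR n R E) (DR n R E') := by
  refine disjoint_left.2 fun A hA hA' => hne ?_
  rcases le_total (E.sup id) (E'.sup id) with hsup | hsup
  · exact hE.eq_of_subset hE' (subset_of_mem_DR_of_sup_le hA hA' hsup)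
  · exact (hE'.eq_of_subset hE (subset_of_mem_DR_of_sup_le hA' hA hsup)).symm

lemma IsGenSet.mem_of_mem_DR (hE : IsGenSet n R F E) (hA : A ∈ DR n R E) : A ∈ F := by
  obtain ⟨hAfam, hAE⟩ := mem_DR.1 hA
  exact hE.2.2.1 (mem_upSet.2 ⟨hAfam, hAE ▸ inter_subset_left⟩)

lemma exists_isGenSet_mem_DR (hF : F ⊆ famR n R) (hmono : MonotoneFam n R F)
    (hlc : LeftCompressed n F) (hA : A ∈ F) : ∃ E, IsGenSet n R F E ∧ A ∈ DR n R E := by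
  obtain ⟨hAsub, hAcard⟩ := mem_famR.1 (hF hA)
  have hAn : upSet n R (A ∩ Icc 1 n) ⊆ F := by
    rw [inter_eq_left.2 hAsub]
    exact hmono.upSet_subset hA
  have hex : ∃ m, upSet n R (A ∩ Icc 1 m) ⊆ F := ⟨n, hAn⟩
  set m := Nat.find hex
  have hmn : m ≤ n := Nat.find_min' hex hAn
  have hEm : A ∩ Icc 1 m ⊆ Icc 1 m := inter_subset_right
  refine ⟨A ∩ Icc 1 m, ⟨inter_subset_left.trans hAsub,
    (card_le_card inter_subset_left).trans (le_sup (f := id) hAcard), Nat.find_spec hex, ?_⟩,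
    mem_DR.2 ⟨hF hA, inter_Icc_sup_inter_Icc m⟩⟩
  intro E' hE'E hE'
  obtain ⟨D, hD, hDF⟩ := hlc.exists_subset_erase_upSet_subset hmn hEm hE'E hE'
  obtain ⟨x, hx, -⟩ := exists_of_ssubset hE'E
  have hxm := mem_Icc.1 (hEm hx)
  exact Nat.find_min hex (by omega : m - 1 < m)
    ((inter_Icc_sub_one m ▸ upSet_anti hD).trans hDF)

end

theorem stmt10_general (n : ℕ) (R : Finset ℕ)
    (F : Finset (Finset ℕ)) (hF : F ⊆ famR n R)
    (hmono : MonotoneFam n R F) (hlc : LeftCompressed n F) :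
    (∀ E1 E2, IsGenSet n R F E1 → IsGenSet n R F E2 → E1 ≠ E2 →
      Disjoint (DR n R E1) (DR n R E2)) ∧
    (∀ A, A ∈ F ↔ ∃ E, IsGenSet n R F E ∧ A ∈ DR n R E) :=
  ⟨fun _ _ hE1 hE2 hne => hE1.disjoint_DR hE2 hne, fun _ =>
    ⟨exists_isGenSet_mem_DR hF hmono hlc, fun ⟨_, hE, hA⟩ => hE.mem_of_mem_DR hA⟩⟩

theorem stmt10 (n : ℕ) (R : Finset ℕ) (hRne : R.Nonempty) (hRsub : R ⊆ Finset.Icc 1 n)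
    (F : Finset (Finset ℕ)) (hF : F ⊆ famR n R)
    (hmono : MonotoneFam n R F) (hlc : LeftCompressed n F) :
    (∀ E1 E2, IsGenSet n R F E1 → IsGenSet n R F E2 → E1 ≠ E2 →
      Disjoint (DR n R E1) (DR n R E2)) ∧
    (∀ A, A ∈ F ↔ ∃ E, IsGenSet n R F E ∧ A ∈ DR n R E) :=
  stmt10_general n R F hF hmono hlc
end
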